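/- arXiv:math/0701643 — 5 statements merged into one kernel-verified Lean document; each statement's English description precedes it below -/
import Mathlib

section
/- For any nonnegative integer l, the formal power series K_l(q) ∈ Z[[q]] defined by the recursion K_0(q) = 1 and K_l(q) = (q^l/(1 - q^{2l})) · Σ_{b=0}^{l-1} q^b K_b(q) for l ≥ 1 satisfies K_l(q) = q^l / ∏_{i=1}^{l} (1 - q^{2i}). -/
open PowerSeries

private noncomputable def Pprod (l : ℕ) : PowerSeries ℤ :=
  ∏ i ∈ Finset.range l,
    PowerSeries.invOfUnit (1 - (PowerSeries.X : PowerSeries ℤ) ^ (2 * (i + 1))) 1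

private lemma mul_inv_aux (n : ℕ) (hn : 1 ≤ n) :
    (1 - (PowerSeries.X : PowerSeries ℤ) ^ n) *
      PowerSeries.invOfUnit (1 - (PowerSeries.X : PowerSeries ℤ) ^ n) 1 = 1 := by
  apply PowerSeries.mul_invOfUnit
  simp [PowerSeries.constantCoeff_X, zero_pow (by omega : n ≠ 0)]

private lemma Pprod_succ (l : ℕ) :
    Pprod (l + 1) = Pprod l *
      PowerSeries.invOfUnit (1 - (PowerSeries.X : PowerSeries ℤ) ^ (2 * (l + 1))) 1 := by
  simp [Pprod, Finset.prod_range_succ]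

private lemma key_sum (l : ℕ) (hl : 1 ≤ l) :
    ∑ b ∈ Finset.range l, (PowerSeries.X : PowerSeries ℤ) ^ (2 * b) * Pprod b
      = Pprod (l - 1) := by
  induction l with
  | zero => omega
  | succ n ih =>
    rcases Nat.eq_or_lt_of_le hl with h | h
    · simp [← h, Pprod]
    · have hn : 1 ≤ n := by omega
      rw [Finset.sum_range_succ, ih hn]
      simp only [Nat.add_sub_cancel]
      have hP : Pprod (n - 1) = (1 - (PowerSeries.X : PowerSeries ℤ) ^ (2 * n)) * Pprod n := by
        have : Pprod n = Pprod (n - 1) *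
            PowerSeries.invOfUnit (1 - (PowerSeries.X : PowerSeries ℤ) ^ (2 * n)) 1 := by
          have := Pprod_succ (n - 1)
          rwa [Nat.sub_add_cancel hn] at this
        rw [this, ← mul_assoc, mul_comm (1 - _), mul_assoc,
          mul_inv_aux (2 * n) (by omega), mul_one]
      rw [hP]
      ring

/-- The formal power series K_l(q) ∈ ℤ[[q]] defined by K_0 = 1 and the
recursion K_l(q) = (q^l/(1-q^{2l})) · Σ_{b=0}^{l-1} q^b K_b(q) for l ≥ 1 satisfies
K_l(q) = q^l / ∏_{i=1}^{l}(1-q^{2i}).  (The factor 1/(1-q^{2l}) is realized via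
`PowerSeries.invOfUnit`, valid since 1 - q^{2l} has constant term 1.) -/
theorem stmt4 (K : ℕ → PowerSeries ℤ)
    (hK0 : K 0 = 1)
    (hKrec : ∀ l : ℕ, 1 ≤ l →
      K l = (PowerSeries.X : PowerSeries ℤ) ^ l *
        PowerSeries.invOfUnit (1 - (PowerSeries.X : PowerSeries ℤ) ^ (2 * l)) 1 *
        ∑ b ∈ Finset.range l, (PowerSeries.X : PowerSeries ℤ) ^ b * K b) :
    ∀ l : ℕ, K l = (PowerSeries.X : PowerSeries ℤ) ^ l *
      ∏ i ∈ Finset.range l,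
        PowerSeries.invOfUnit (1 - (PowerSeries.X : PowerSeries ℤ) ^ (2 * (i + 1))) 1 := by
  intro l
  induction l using Nat.strong_induction_on with
  | _ l ih =>
    rcases Nat.eq_zero_or_pos l with rfl | hl
    · simpa using hK0
    · have hsum : ∑ b ∈ Finset.range l, (PowerSeries.X : PowerSeries ℤ) ^ b * K b
          = Pprod (l - 1) := by
        rw [← key_sum l hl]
        apply Finset.sum_congr rfl
        intro b hb
        rw [ih b (Finset.mem_range.mp hb)]
        show _ = X ^ (2 * b) * Pprod b
        rw [two_mul, pow_add, mul_assoc]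
        rfl
      rw [hKrec l hl, hsum]
      show _ = X ^ l * Pprod l
      have hPl : Pprod l = Pprod (l - 1) *
          PowerSeries.invOfUnit (1 - (PowerSeries.X : PowerSeries ℤ) ^ (2 * l)) 1 := by
        have := Pprod_succ (l - 1)
        rwa [Nat.sub_add_cancel hl] at this
      rw [hPl]
      ring
end

section
/- Let μ be a partition with d nonzero parts and m a nonnegative integer with m - |μ| = 2l for a nonnegative integer l. Define h(μ) = Σ_{i=1}^{d} (i-1)μ_i and μ^♭ = (μ_2, ..., μ_d). Define G(m, μ) ∈ Z[[q]] by G(m, μ) = q^{h(μ)} · q^l / ∏_{i=1}^{l}(1-q^{2i}), i.e., G(m, μ) = q^{h(μ)} G(2l, ∅), so that G(0, ∅) = 1 and G(2l, ∅) = q^l/∏_{i=1}^{l}(1-q^{2i}). Then G satisfies the recursion G(m, μ) = Σ_{r+2a = m-μ_1, r ≥ |μ^♭|, r-|μ^♭| even} q^{r+a} G(r, μ^♭). -/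
open PowerSeries

/-- Size |μ| = Σ_i μ_i of a partition given as a function ℕ → ℕ (μ i is the (i+1)-st part). -/
noncomputable def psize (μ : ℕ → ℕ) : ℕ := ∑ᶠ i, μ i

/-- The statistic h(μ) = Σ_{i=1}^{d} (i-1) μ_i (0-indexed: Σ_i i·μ i). -/
noncomputable def hstat (μ : ℕ → ℕ) : ℕ := ∑ᶠ i, i * μ i

/-- The closed formula G(m,μ) = q^{h(μ)+l} / ∏_{i=1}^{l}(1-q^{2i}) ∈ ℤ[[q]],
where l = (m - |μ|)/2; the inverses are realized by `PowerSeries.invOfUnit`. -/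
noncomputable def Gser (m : ℕ) (μ : ℕ → ℕ) : PowerSeries ℤ :=
  (PowerSeries.X : PowerSeries ℤ) ^ (hstat μ + (m - psize μ) / 2) *
    ∏ i ∈ Finset.range ((m - psize μ) / 2),
      PowerSeries.invOfUnit (1 - (PowerSeries.X : PowerSeries ℤ) ^ (2 * (i + 1))) 1

lemma psize_eq_sum (μ : ℕ → ℕ) (d : ℕ) (hd : ∀ i, d ≤ i → μ i = 0) :
    psize μ = ∑ i ∈ Finset.range d, μ i := by
  apply finsum_eq_finset_sum_of_support_subset
  intro x hx
  simp only [Function.mem_support] at hx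
  simp only [Finset.coe_range, Set.mem_Iio]
  by_contra h
  exact hx (hd x (by omega))

lemma hstat_eq_sum (μ : ℕ → ℕ) (d : ℕ) (hd : ∀ i, d ≤ i → μ i = 0) :
    hstat μ = ∑ i ∈ Finset.range d, i * μ i := by
  apply finsum_eq_finset_sum_of_support_subset
  intro x hx
  simp only [Function.mem_support] at hx
  simp only [Finset.coe_range, Set.mem_Iio]
  by_contra h
  rw [hd x (by omega), mul_zero] at hx
  exact hx rfl

lemma key_prod (l : ℕ) :
    (∏ i ∈ Finset.range l,
        PowerSeries.invOfUnit (1 - (PowerSeries.X : PowerSeries ℤ) ^ (2 * (i + 1))) 1)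
      = ∑ j ∈ Finset.range (l + 1), (PowerSeries.X : PowerSeries ℤ) ^ (2 * j) *
          ∏ i ∈ Finset.range j,
            PowerSeries.invOfUnit (1 - (PowerSeries.X : PowerSeries ℤ) ^ (2 * (i + 1))) 1 := by
  induction l with
  | zero => simp
  | succ n ih =>
    rw [Finset.sum_range_succ, ← ih, Finset.prod_range_succ]
    have h1 : (1 - (PowerSeries.X : PowerSeries ℤ) ^ (2 * (n + 1))) *
        PowerSeries.invOfUnit (1 - (PowerSeries.X : PowerSeries ℤ) ^ (2 * (n + 1))) 1 = 1 := by
      apply PowerSeries.mul_invOfUnit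
      have h0 : PowerSeries.constantCoeff ((PowerSeries.X : PowerSeries ℤ) ^ (2 * (n + 1))) = 0 := by
        rw [map_pow]
        simp
      simp [map_sub, h0]
    linear_combination (∏ i ∈ Finset.range n,
      PowerSeries.invOfUnit (1 - (PowerSeries.X : PowerSeries ℤ) ^ (2 * (i + 1))) 1) * h1

/-- Let μ be a partition with d nonzero parts and m = |μ| + 2l.  The family
G(m,μ) = q^{h(μ)} · q^l/∏_{i=1}^{l}(1-q^{2i}) satisfies the recursion
G(m,μ) = Σ_{r+2a = m-μ₁, r ≥ |μ♭|, r-|μ♭| even} q^{r+a} G(r, μ♭),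
where μ♭ = (μ₂,…,μ_d); the sum is over nonnegative integers r, a with r + 2a = m - μ₁
(so a = (m - μ₁ - r)/2 and m - μ₁ - r must be even). -/
theorem stmt7 (μ : ℕ → ℕ) (d : ℕ) (hanti : Antitone μ) (hd : ∀ i, d ≤ i → μ i = 0)
    (m l : ℕ) (hml : m = psize μ + 2 * l) :
    Gser m μ =
      ∑ r ∈ (Finset.range (m - μ 0 + 1)).filter
          (fun r => psize (fun i => μ (i + 1)) ≤ r ∧
            Even (r - psize (fun i => μ (i + 1))) ∧ Even (m - μ 0 - r)),
        (PowerSeries.X : PowerSeries ℤ) ^ (r + (m - μ 0 - r) / 2) *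
          Gser r (fun i => μ (i + 1)) := by
  set ν : ℕ → ℕ := fun i => μ (i + 1) with hνdef
  have hdν : ∀ i, d ≤ i → ν i = 0 := fun i hi => hd (i + 1) (by omega)
  have hps : psize μ = μ 0 + psize ν := by
    rw [psize_eq_sum μ (d + 1) (fun i hi => hd i (by omega)), psize_eq_sum ν d hdν,
      Finset.sum_range_succ']
    exact add_comm _ _
  have hhs : hstat μ = psize ν + hstat ν := by
    rw [hstat_eq_sum μ (d + 1) (fun i hi => hd i (by omega)), hstat_eq_sum ν d hdν,
      psize_eq_sum ν d hdν, Finset.sum_range_succ']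
    simp only [zero_mul, add_zero]
    rw [← Finset.sum_add_distrib]
    exact Finset.sum_congr rfl fun i _ => by ring
  have hm : m - μ 0 = psize ν + 2 * l := by omega
  have hl : (m - psize μ) / 2 = l := by omega
  have hsum : ∑ r ∈ (Finset.range (m - μ 0 + 1)).filter
          (fun r => psize ν ≤ r ∧ Even (r - psize ν) ∧ Even (m - μ 0 - r)),
        (PowerSeries.X : PowerSeries ℤ) ^ (r + (m - μ 0 - r) / 2) * Gser r ν
      = ∑ j ∈ Finset.range (l + 1),
        (PowerSeries.X : PowerSeries ℤ) ^ ((psize ν + 2 * j) + (m - μ 0 - (psize ν + 2 * j)) / 2)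
          * Gser (psize ν + 2 * j) ν := by
    symm
    apply Finset.sum_nbij' (i := fun j => psize ν + 2 * j) (j := fun r => (r - psize ν) / 2)
    · intro a ha
      simp only [Finset.mem_range] at ha
      simp only [Finset.mem_filter, Finset.mem_range, Nat.even_iff]
      omega
    · intro a ha
      simp only [Finset.mem_filter, Finset.mem_range, Nat.even_iff] at ha
      simp only [Finset.mem_range]
      omega
    · intro a ha; omega
    · intro a ha
      simp only [Finset.mem_filter, Finset.mem_range, Nat.even_iff] at ha
      omega
    · intro a ha; rfl
  rw [hsum]
  have hterm : ∀ j ∈ Finset.range (l + 1),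
      (PowerSeries.X : PowerSeries ℤ) ^ ((psize ν + 2 * j) + (m - μ 0 - (psize ν + 2 * j)) / 2)
          * Gser (psize ν + 2 * j) ν
        = (PowerSeries.X : PowerSeries ℤ) ^ (hstat μ + l) *
          ((PowerSeries.X : PowerSeries ℤ) ^ (2 * j) *
            ∏ i ∈ Finset.range j,
              PowerSeries.invOfUnit (1 - (PowerSeries.X : PowerSeries ℤ) ^ (2 * (i + 1))) 1) := by
    intro j hj
    simp only [Finset.mem_range] at hj
    have h2 : (psize ν + 2 * j - psize ν) / 2 = j := by omega
    rw [Gser, h2, ← mul_assoc, ← pow_add, ← mul_assoc, ← pow_add]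
    congr 2
    omega
  rw [Finset.sum_congr rfl hterm, ← Finset.mul_sum, ← key_prod, Gser, hl]
end

section
/- If λ, μ are partitions of the same size |λ| = |μ| with at most n parts, then the Lusztig q-analogue K_{λ,μ}^{g}(q) for g of type B_n, C_n, or D_n equals the type A Kostka-Foulkes polynomial K_{λ,μ}^{gl_n}(q). -/
open scoped Classical

noncomputable section

/-- Weights of a rank-`n` classical Lie algebra, in the standard ε-coordinates. -/
abbrev Wt (n : ℕ) := Fin n → ℚ

/-- The standard basis vector ε_i. -/
def ee {n : ℕ} (i : Fin n) : Wt n := fun j => if j = i then 1 else 0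

/-- The three classical types B, C, D. -/
inductive CType | B | C | D

/-- The set of positive roots of B_n, C_n, D_n (ε-coordinates):
ε_i ± ε_j for i < j in all types, together with ε_i (type B) or 2ε_i (type C). -/
def posRoots (t : CType) (n : ℕ) : Set (Wt n) :=
  {v | ∃ i j : Fin n, i < j ∧ (v = ee i - ee j ∨ v = ee i + ee j)} ∪
    (match t with
      | CType.B => {v | ∃ i : Fin n, v = ee i}
      | CType.C => {v | ∃ i : Fin n, v = ee i + ee i}
      | CType.D => ∅)

/-- `Pk t n k β` = 𝒫^k(β): the number of ways of writing β as a sum of `k`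
positive roots, i.e. the coefficient of q^k e^β in ∏_{α ∈ R⁺} (1-q e^α)^{-1}. -/
def Pk (t : CType) (n k : ℕ) (β : Wt n) : ℕ :=
  Nat.card {M : Sym (posRoots t n) k //
    ((M : Multiset (posRoots t n)).map Subtype.val).sum = β}

/-- The half-sum ρ of positive roots. -/
def rho (t : CType) (n : ℕ) : Wt n := fun i =>
  match t with
  | CType.B => (n : ℚ) - (i : ℚ) - 1/2
  | CType.C => (n : ℚ) - (i : ℚ)
  | CType.D => (n : ℚ) - (i : ℚ) - 1

/-- The hyperoctahedral group: pairs (permutation, sign vector), acting on weights by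
signed permutation of the coordinates. -/
abbrev SignedPerm (n : ℕ) := Equiv.Perm (Fin n) × (Fin n → Bool)

/-- The action of a signed permutation on a weight. -/
def wact {n : ℕ} (g : SignedPerm n) (v : Wt n) : Wt n :=
  fun i => (if g.2 i then -1 else 1) * v (g.1.symm i)

/-- The determinant (-1)^{ℓ(w)} of a signed permutation on the reflection representation. -/
def wsign {n : ℕ} (g : SignedPerm n) : ℤ :=
  Equiv.Perm.sign g.1 * ∏ i, (if g.2 i then (-1 : ℤ) else 1)

/-- The Weyl group of type B_n, C_n (all signed permutations) or D_n (those with an even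
number of sign changes), as a finite set of signed permutations. -/
def Wgrp (t : CType) (n : ℕ) : Finset (SignedPerm n) :=
  match t with
  | CType.D => Finset.univ.filter
      (fun g => Even ((Finset.univ.filter fun i => g.2 i = true).card))
  | _ => Finset.univ

/-- A partition (ℕ → ℕ) viewed as a weight of rank n. -/
def res (n : ℕ) (f : ℕ → ℕ) : Wt n := fun i => (f i : ℚ)

/-- `Kcoef t n λ μ k` : the coefficient K_{λ,μ}^{g,k} of q^k in the Lusztig q-analogue
K_{λ,μ}^{g}(q) = Σ_{w ∈ W^g} (-1)^{ℓ(w)} 𝒫_q(w(λ+ρ) - (μ+ρ)) for g of type `t` and rank n. -/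
def Kcoef (t : CType) (n : ℕ) (lam mu : ℕ → ℕ) (k : ℕ) : ℤ :=
  ∑ g ∈ Wgrp t n, wsign g *
    (Pk t n k (wact g (res n lam + rho t n) - (res n mu + rho t n)) : ℤ)

end

noncomputable section

/-- Positive roots of type A_{n-1}: ε_i - ε_j for i < j. -/
def posRootsA (n : ℕ) : Set (Wt n) := {v | ∃ i j : Fin n, i < j ∧ v = ee i - ee j}

/-- The type A q-Kostant partition function. -/
def PkA (n k : ℕ) (β : Wt n) : ℕ :=
  Nat.card {M : Sym (posRootsA n) k //
    ((M : Multiset (posRootsA n)).map Subtype.val).sum = β}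

/-- A ρ-shift for type A_{n-1}: (n-1, n-2, …, 0). -/
def rhoA (n : ℕ) : Wt n := fun i => (n : ℚ) - (i : ℚ) - 1

/-- The Kostka–Foulkes polynomial coefficient: the coefficient of q^k in
K_{λ,μ}^{gl_n}(q) = Σ_{w ∈ S_n} (-1)^{ℓ(w)} 𝒫_q(w(λ+ρ) - (μ+ρ)) (type A_{n-1}). -/
def KcoefA (n : ℕ) (lam mu : ℕ → ℕ) (k : ℕ) : ℤ :=
  ∑ s : Equiv.Perm (Fin n), (Equiv.Perm.sign s : ℤ) *
    (PkA n k ((fun i => (res n lam + rhoA n) (s.symm i)) - (res n mu + rhoA n)) : ℤ)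


-- ===== auxiliary lemmas =====

def csum {n : ℕ} (v : Wt n) : ℚ := ∑ i, v i

lemma csum_ee {n : ℕ} (i : Fin n) : csum (ee i) = 1 := by
  simp [csum, ee, Finset.sum_ite_eq']

lemma csum_add {n : ℕ} (a b : Wt n) : csum (a + b) = csum a + csum b := by
  simp [csum, Finset.sum_add_distrib]

lemma csum_sub {n : ℕ} (a b : Wt n) : csum (a - b) = csum a - csum b := by
  simp [csum, Finset.sum_sub_distrib]

lemma csum_msum {n : ℕ} (M : Multiset (Wt n)) : csum M.sum = (M.map csum).sum := by
  induction M using Multiset.induction with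
  | empty => simp [csum]
  | cons a s ih => simp [csum_add, ih]

lemma csum_root {t : CType} {n : ℕ} {v : Wt n} (hv : v ∈ posRoots t n) :
    0 ≤ csum v ∧ (csum v = 0 → v ∈ posRootsA n) := by
  rcases hv with ⟨i, j, hij, rfl | rfl⟩ | h
  · rw [csum_sub, csum_ee, csum_ee]
    exact ⟨by norm_num, fun _ => ⟨i, j, hij, rfl⟩⟩
  · rw [csum_add, csum_ee, csum_ee]; norm_num
  · cases t with
    | B => obtain ⟨i, rfl⟩ := h; rw [csum_ee]; norm_num
    | C => obtain ⟨i, rfl⟩ := h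
           rw [csum_add, csum_ee]; norm_num
    | D => exact absurd h (Set.notMem_empty _)

lemma rootsA_sub {t : CType} {n : ℕ} : posRootsA n ⊆ posRoots t n := by
  rintro v ⟨i, j, hij, rfl⟩
  exact Or.inl ⟨i, j, hij, Or.inl rfl⟩

lemma card_sym {n : ℕ} (R : Set (Wt n)) (k : ℕ) (β : Wt n) :
    Nat.card {M : Sym R k // ((M : Multiset R).map Subtype.val).sum = β} =
    Nat.card {N : Multiset (Wt n) // N.card = k ∧ (∀ x ∈ N, x ∈ R) ∧ N.sum = β} := by
  apply Nat.card_congr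
  apply Equiv.ofBijective (f := fun M =>
    ⟨((M.1 : Multiset R).map Subtype.val), by
      simp [M.1.2], by
      intro x hx
      obtain ⟨y, _, rfl⟩ := Multiset.mem_map.mp hx
      exact y.2, M.2⟩)
  constructor
  · rintro ⟨⟨M, hM⟩, h1⟩ ⟨⟨M', hM'⟩, h2⟩ h
    simp only [Subtype.mk.injEq] at h ⊢
    exact Subtype.ext (Sym.coe_injective (Multiset.map_injective Subtype.val_injective h))
  · rintro ⟨N, hk, hmem, hsum⟩
    refine ⟨⟨⟨N.attach.map (fun x => (⟨x.1, hmem x.1 x.2⟩ : R)), by simp [hk]⟩, ?_⟩, ?_⟩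
    · show ((Multiset.map _ N.attach).map Subtype.val).sum = β
      rw [Multiset.map_map]
      simp only [Function.comp]
      rw [Multiset.attach_map_val]; exact hsum
    · apply Subtype.ext
      show (Multiset.map _ N.attach).map Subtype.val = N
      rw [Multiset.map_map]
      simp only [Function.comp]
      rw [Multiset.attach_map_val]

lemma pred_iff {t : CType} {n k : ℕ} {β : Wt n} (hβ : csum β = 0)
    (N : Multiset (Wt n)) :
    (N.card = k ∧ (∀ x ∈ N, x ∈ posRoots t n) ∧ N.sum = β) ↔
    (N.card = k ∧ (∀ x ∈ N, x ∈ posRootsA n) ∧ N.sum = β) := by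
  constructor
  · rintro ⟨h1, h2, h3⟩
    refine ⟨h1, fun x hx => ?_, h3⟩
    have hnn : ∀ y ∈ N.map csum, 0 ≤ y := by
      intro y hy
      obtain ⟨z, hz, rfl⟩ := Multiset.mem_map.mp hy
      exact (csum_root (h2 z hz)).1
    have hsum0 : (N.map csum).sum = 0 := by
      rw [← csum_msum, h3, hβ]
    have hx0 : csum x = 0 := by
      have h4 := Multiset.single_le_sum hnn (csum x) (Multiset.mem_map_of_mem _ hx)
      have h5 := hnn (csum x) (Multiset.mem_map_of_mem _ hx)
      rw [hsum0] at h4; linarith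
    exact (csum_root (h2 x hx)).2 hx0
  · rintro ⟨h1, h2, h3⟩
    exact ⟨h1, fun x hx => rootsA_sub (h2 x hx), h3⟩

lemma empty_of_neg {t : CType} {n k : ℕ} {β : Wt n} (hβ : csum β < 0) :
    IsEmpty {N : Multiset (Wt n) // N.card = k ∧ (∀ x ∈ N, x ∈ posRoots t n) ∧ N.sum = β} := by
  constructor
  rintro ⟨N, h1, h2, h3⟩
  have hnn : ∀ y ∈ N.map csum, 0 ≤ y := by
    intro y hy
    obtain ⟨z, hz, rfl⟩ := Multiset.mem_map.mp hy
    exact (csum_root (h2 z hz)).1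
  have h4 := Multiset.sum_nonneg hnn
  rw [← csum_msum, h3] at h4
  linarith

lemma Pk_zero {t : CType} {n k : ℕ} {β : Wt n} (hβ : csum β < 0) : Pk t n k β = 0 := by
  unfold Pk
  rw [card_sym]
  haveI := empty_of_neg (t := t) (k := k) hβ
  exact Nat.card_of_isEmpty

lemma Pk_eq_PkA {t : CType} {n k : ℕ} {β : Wt n} (hβ : csum β = 0) :
    Pk t n k β = PkA n k β := by
  unfold Pk PkA
  rw [card_sym, card_sym]
  exact Nat.card_congr (Equiv.subtypeEquivRight (pred_iff hβ))

lemma v_pos {t : CType} {n : ℕ} (lam : ℕ → ℕ) (j : Fin n) :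
    0 ≤ (res n lam + rho t n) j ∧
      ((res n lam + rho t n) j = 0 → t = CType.D ∧ (j : ℕ) = n - 1) := by
  have hj : ((j : ℕ) : ℚ) + 1 ≤ (n : ℚ) := by
    exact_mod_cast Nat.succ_le_of_lt j.isLt
  have hl : (0 : ℚ) ≤ (lam j : ℚ) := Nat.cast_nonneg _
  cases t with
  | B =>
    simp only [Pi.add_apply, res, rho]
    constructor
    · linarith
    · intro h; linarith
  | C =>
    simp only [Pi.add_apply, res, rho]
    constructor
    · linarith
    · intro h; linarith
  | D =>
    simp only [Pi.add_apply, res, rho]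
    refine ⟨by linarith, fun h => ⟨by trivial, ?_⟩⟩
    have h1 : ((j : ℕ) : ℚ) = (n : ℚ) - 1 := by linarith
    have hn : 1 ≤ n := Nat.one_le_of_lt (Nat.lt_of_le_of_lt (Nat.zero_le _) j.isLt)
    have : ((j : ℕ) : ℚ) = ((n - 1 : ℕ) : ℚ) := by
      rw [h1, Nat.cast_sub hn]; norm_num
    exact_mod_cast this

-- the vanishing of terms with a sign change
lemma term_vanish {t : CType} {n k : ℕ} (lam mu : ℕ → ℕ)
    (hbal : csum (res n lam) = csum (res n mu))
    (g : SignedPerm n) (hg : g ∈ Wgrp t n) (i0 : Fin n) (hi0 : g.2 i0 = true) :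
    Pk t n k (wact g (res n lam + rho t n) - (res n mu + rho t n)) = 0 := by
  set v : Wt n := res n lam + rho t n with hv
  set u : Wt n := res n mu + rho t n with hu
  have hcu : csum v = csum u := by rw [hv, hu, csum_add, csum_add, hbal]
  apply Pk_zero
  rw [csum_sub]
  have hlt : csum (wact g v) < csum v := by
    have h1 : csum (wact g v) = ∑ j, (if g.2 (g.1 j) then (-1 : ℚ) else 1) * v j := by
      rw [csum]
      exact Fintype.sum_equiv g.1.symm _ _ (fun i => by simp [wact])
    rw [h1, csum]
    have hex : ∃ j, g.2 (g.1 j) = true ∧ 0 < v j := by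
      by_contra hc
      push_neg at hc
      have hz : ∀ j, g.2 (g.1 j) = true → v j = 0 := by
        intro j hj
        have := hc j hj
        have := (v_pos (t := t) lam j).1
        linarith
      have hD : t = CType.D ∧ ((g.1.symm i0 : Fin n) : ℕ) = n - 1 := by
        apply (v_pos (t := t) lam (g.1.symm i0)).2
        apply hz
        simp [hi0]
      obtain ⟨hDt, hlast⟩ := hD
      subst hDt
      have heven : Even ((Finset.univ.filter fun i => g.2 i = true).card) := by
        simpa [Wgrp] using hg
      have hsingle : (Finset.univ.filter fun i => g.2 i = true) = {i0} := by
        ext i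
        simp only [Finset.mem_filter, Finset.mem_univ, true_and, Finset.mem_singleton]
        constructor
        · intro hi
          have h2 : ((g.1.symm i : Fin n) : ℕ) = n - 1 := by
            refine ((v_pos (t := CType.D) lam (g.1.symm i)).2 ?_).2
            apply hz; simp [hi]
          have h3 : ((g.1.symm i0 : Fin n) : ℕ) = n - 1 := hlast
          have h4 : (g.1.symm i : Fin n) = g.1.symm i0 := Fin.ext (h2.trans h3.symm)
          have := congrArg g.1 h4
          simpa using this
        · rintro rfl; exact hi0
      rw [hsingle] at heven
      simp at heven
    obtain ⟨j0, hj0, hvj0⟩ := hex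
    apply Finset.sum_lt_sum
    · intro j _
      by_cases hb : g.2 (g.1 j) = true
      · have := (v_pos (t := t) lam j).1
        simp only [hb, if_true]
        linarith
      · simp [hb]
    · exact ⟨j0, Finset.mem_univ j0, by simp only [hj0, if_true]; linarith⟩
  linarith

-- ===== end auxiliary lemmas =====

/-- if λ, μ are partitions of the same size with at most n parts, then the
Lusztig q-analogue K_{λ,μ}^{g}(q) for g of type B_n, C_n or D_n coincides with the
type A Kostka–Foulkes polynomial K_{λ,μ}^{gl_n}(q) (coefficientwise in q). -/
theorem stmt9 (n : ℕ) (lam mu : ℕ → ℕ)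
    (hlam : Antitone lam) (hlam0 : ∀ i, n ≤ i → lam i = 0)
    (hmu : Antitone mu) (hmu0 : ∀ i, n ≤ i → mu i = 0)
    (hsize : ∑ i ∈ Finset.range n, lam i = ∑ i ∈ Finset.range n, mu i)
    (t : CType) (k : ℕ) :
    Kcoef t n lam mu k = KcoefA n lam mu k := by
  classical
  have hbal : csum (res n lam) = csum (res n mu) := by
    simp only [csum, res]
    rw [Fin.sum_univ_eq_sum_range (fun i => (lam i : ℚ)),
      Fin.sum_univ_eq_sum_range (fun i => (mu i : ℚ))]
    exact_mod_cast hsize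
  have hcu : csum (res n lam + rho t n) = csum (res n mu + rho t n) := by
    rw [csum_add, csum_add, hbal]
  let p : SignedPerm n → Prop := fun g => g.2 = fun _ => false
  have step1 : Kcoef t n lam mu k = ∑ g ∈ (Wgrp t n).filter p,
      wsign g * (Pk t n k (wact g (res n lam + rho t n) - (res n mu + rho t n)) : ℤ) := by
    rw [Kcoef]
    refine (Finset.sum_filter_of_ne ?_).symm
    intro g hg hne
    by_contra hpg
    have hex : ∃ i, g.2 i = true := by
      by_contra hc
      push_neg at hc
      apply hpg
      funext i
      simpa using hc i
    obtain ⟨i0, hi0⟩ := hex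
    apply hne
    rw [term_vanish lam mu hbal g hg i0 hi0]
    simp
  have step2 : (Wgrp t n).filter p = Finset.univ.filter p := by
    cases t with
    | B => rfl
    | C => rfl
    | D =>
      ext g
      simp only [Wgrp, Finset.mem_filter, Finset.mem_univ, true_and,
        and_iff_right_iff_imp]
      intro hpg
      have : (Finset.univ.filter fun i => g.2 i = true) = ∅ := by
        ext i
        simp [show g.2 = fun _ => false from hpg]
      rw [this]
      simp
  have step3 : Finset.univ.filter p =
      Finset.image (fun σ : Equiv.Perm (Fin n) => ((σ, fun _ => false) : SignedPerm n))
        Finset.univ := by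
    ext g
    simp only [Finset.mem_filter, Finset.mem_univ, true_and, Finset.mem_image]
    constructor
    · intro hpg
      obtain ⟨σ, b⟩ := g
      have hb : b = fun _ => false := hpg
      subst hb
      exact ⟨σ, rfl⟩
    · rintro ⟨σ, rfl⟩
      rfl
  rw [step1, step2, step3, Finset.sum_image (by
    intro a _ b _ h
    exact congrArg Prod.fst h)]
  rw [KcoefA]
  apply Finset.sum_congr rfl
  intro σ _
  have hsign : wsign ((σ, fun _ => false) : SignedPerm n) = Equiv.Perm.sign σ := by
    simp [wsign]
  have hwact : wact ((σ, fun _ => false) : SignedPerm n) (res n lam + rho t n) =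
      fun i => (res n lam + rho t n) (σ.symm i) := by
    funext i
    simp [wact]
  have hcs : csum (wact ((σ, fun _ => false) : SignedPerm n) (res n lam + rho t n)
      - (res n mu + rho t n)) = 0 := by
    rw [csum_sub, hwact]
    have h2 : csum (fun i => (res n lam + rho t n) (σ.symm i))
        = csum (res n lam + rho t n) := by
      rw [csum, csum]
      exact Equiv.sum_comp σ.symm _
    rw [h2, hcu]
    ring
  have hβ : wact ((σ, fun _ => false) : SignedPerm n) (res n lam + rho t n)
      - (res n mu + rho t n) =
      (fun i => (res n lam + rhoA n) (σ.symm i)) - (res n mu + rhoA n) := by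
    rw [hwact]
    funext i
    cases t <;> simp only [Pi.sub_apply, Pi.add_apply, rho, rhoA] <;> ring
  rw [hsign, Pk_eq_PkA hcs, hβ]

end
end

section
/- Let g be the symplectic Lie algebra sp_{2n} and let ν, μ be partitions with at most n parts. If the Lusztig q-analogue K_{ν,μ}^{sp_{2n}}(q) is nonzero, then its lowest-degree term has degree at least (|ν| - |μ|)/2. -/
open scoped Classical

lemma ee_abs_sum {n : ℕ} (i : Fin n) : ∑ m, |ee i m| = 1 := by
  simp [ee, apply_ite abs]

lemma root_abs_sum {n : ℕ} {v : Wt n} (hv : v ∈ posRoots CType.C n) :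
    ∑ m, |v m| = 2 := by
  rcases hv with ⟨i, j, hij, h | h⟩ | ⟨i, h⟩
  · have hne : i ≠ j := hij.ne
    have key : ∀ m, |v m| = |ee i m| + |ee j m| := by
      intro m
      by_cases hmi : m = i <;> by_cases hmj : m = j <;>
        simp_all [h, ee, Pi.sub_apply]
    rw [Finset.sum_congr rfl fun m _ => key m, Finset.sum_add_distrib,
      ee_abs_sum, ee_abs_sum]
    norm_num
  · have hne : i ≠ j := hij.ne
    have key : ∀ m, |v m| = |ee i m| + |ee j m| := by
      intro m
      by_cases hmi : m = i <;> by_cases hmj : m = j <;>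
        simp_all [h, ee, Pi.add_apply]
    rw [Finset.sum_congr rfl fun m _ => key m, Finset.sum_add_distrib,
      ee_abs_sum, ee_abs_sum]
    norm_num
  · have key : ∀ m, |v m| = |ee i m| + |ee i m| := by
      intro m
      by_cases hmi : m = i <;> simp_all [h, ee, Pi.add_apply]
    rw [Finset.sum_congr rfl fun m _ => key m, Finset.sum_add_distrib,
      ee_abs_sum]
    norm_num

lemma multiset_abs_sum {n : ℕ} (M : Multiset (Wt n))
    (hM : ∀ v ∈ M, ∑ m, |v m| = 2) :
    ∑ m, |M.sum m| ≤ 2 * (Multiset.card M : ℚ) := by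
  induction M using Multiset.induction with
  | empty => simp
  | cons a s ih =>
    have ha : ∑ m, |a m| = 2 := hM a (Multiset.mem_cons_self a s)
    have hs : ∑ m, |s.sum m| ≤ 2 * (Multiset.card s : ℚ) :=
      ih fun v hv => hM v (Multiset.mem_cons_of_mem hv)
    have hb : ∀ m, |(a ::ₘ s).sum m| ≤ |a m| + |s.sum m| := by
      intro m
      rw [Multiset.sum_cons]
      exact abs_add_le _ _
    calc ∑ m, |(a ::ₘ s).sum m| ≤ ∑ m, (|a m| + |s.sum m|) :=
          Finset.sum_le_sum fun m _ => hb m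
      _ = 2 + ∑ m, |s.sum m| := by rw [Finset.sum_add_distrib, ha]
      _ ≤ 2 + 2 * (Multiset.card s : ℚ) := by linarith
      _ = 2 * (Multiset.card (a ::ₘ s) : ℚ) := by
          rw [Multiset.card_cons]; push_cast; ring

/-- for g = sp_{2n} (type C_n) and partitions ν, μ with at most n parts,
if the Lusztig q-analogue K_{ν,μ}^{sp_{2n}}(q) is nonzero, its lowest-degree term has
degree at least (|ν|-|μ|)/2; equivalently, the coefficient of q^k vanishes whenever
k < (|ν|-|μ|)/2, i.e. whenever 2k + |μ| < |ν|. -/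
theorem stmt10 (n : ℕ) (nu mu : ℕ → ℕ)
    (hnu : Antitone nu) (hnu0 : ∀ i, n ≤ i → nu i = 0)
    (hmu : Antitone mu) (hmu0 : ∀ i, n ≤ i → mu i = 0)
    (k : ℕ)
    (hk : 2 * k + (∑ i ∈ Finset.range n, mu i) < ∑ i ∈ Finset.range n, nu i) :
    Kcoef CType.C n nu mu k = 0 := by
  unfold Kcoef
  apply Finset.sum_eq_zero
  intro g _
  have hP : Pk CType.C n k
      (wact g (res n nu + rho CType.C n) - (res n mu + rho CType.C n)) = 0 := by
    rw [Pk, Nat.card_eq_zero]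
    left
    constructor
    rintro ⟨M, hsum⟩
    set a : Wt n := res n nu + rho CType.C n with ha_def
    set b : Wt n := res n mu + rho CType.C n with hb_def
    set β : Wt n := wact g a - b with hβ_def
    -- nonnegativity of a and b
    have ha_nonneg : ∀ i, 0 ≤ a i := by
      intro i
      have hi : (i : ℚ) < n := by exact_mod_cast i.isLt
      simp only [ha_def, Pi.add_apply, res, rho]
      have : (0:ℚ) ≤ (nu i : ℚ) := Nat.cast_nonneg _
      linarith
    have hb_nonneg : ∀ i, 0 ≤ b i := by
      intro i
      have hi : (i : ℚ) < n := by exact_mod_cast i.isLt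
      simp only [hb_def, Pi.add_apply, res, rho]
      have : (0:ℚ) ≤ (mu i : ℚ) := Nat.cast_nonneg _
      linarith
    -- upper bound
    have hcard : Multiset.card ((M : Multiset (posRoots CType.C n)).map Subtype.val) = k := by
      rw [Multiset.card_map]
      exact M.2
    have hupper : ∑ m, |β m| ≤ 2 * (k : ℚ) := by
      have := multiset_abs_sum ((M : Multiset (posRoots CType.C n)).map Subtype.val)
        (by
          intro v hv
          rcases Multiset.mem_map.mp hv with ⟨x, _, rfl⟩
          exact root_abs_sum x.2)
      rw [hsum, hcard] at this
      exact this
    -- lower bound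
    have hlow : ∀ m, a (g.1.symm m) - b m ≤ |β m| := by
      intro m
      have h1 : |wact g a m| = a (g.1.symm m) := by
        simp only [wact]
        rcases Bool.eq_false_or_eq_true (g.2 m) with h | h <;>
          simp [h, abs_of_nonneg (ha_nonneg (g.1.symm m))]
      have h2 : |wact g a m| - |b m| ≤ |β m| := by
        rw [hβ_def]
        exact abs_sub_abs_le_abs_sub _ _
      rw [h1, abs_of_nonneg (hb_nonneg m)] at h2
      exact h2
    have hsum_low : ∑ m, (a (g.1.symm m) - b m) ≤ ∑ m, |β m| :=
      Finset.sum_le_sum fun m _ => hlow m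
    have hperm : ∑ m, a (g.1.symm m) = ∑ m, a m := Equiv.sum_comp g.1.symm a
    have hab : ∑ m, (a (g.1.symm m) - b m)
        = ∑ m : Fin n, ((nu m : ℚ) - (mu m : ℚ)) := by
      rw [Finset.sum_sub_distrib, hperm, ← Finset.sum_sub_distrib]
      apply Finset.sum_congr rfl
      intro m _
      simp only [ha_def, hb_def, Pi.add_apply, res]
      ring
    have hnu_sum : ∑ m : Fin n, (nu m : ℚ) = ((∑ i ∈ Finset.range n, nu i : ℕ) : ℚ) := by
      push_cast
      exact Fin.sum_univ_eq_sum_range (fun i => (nu i : ℚ)) n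
    have hmu_sum : ∑ m : Fin n, (mu m : ℚ) = ((∑ i ∈ Finset.range n, mu i : ℕ) : ℚ) := by
      push_cast
      exact Fin.sum_univ_eq_sum_range (fun i => (mu i : ℚ)) n
    have hfinal : ((∑ i ∈ Finset.range n, nu i : ℕ) : ℚ)
        - ((∑ i ∈ Finset.range n, mu i : ℕ) : ℚ) ≤ 2 * (k : ℚ) := by
      calc _ = ∑ m : Fin n, ((nu m : ℚ) - (mu m : ℚ)) := by
              rw [Finset.sum_sub_distrib, hnu_sum, hmu_sum]
        _ = ∑ m, (a (g.1.symm m) - b m) := hab.symm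
        _ ≤ ∑ m, |β m| := hsum_low
        _ ≤ 2 * (k : ℚ) := hupper
    have hkq : (2 * k + (∑ i ∈ Finset.range n, mu i) : ℕ) <
        ((∑ i ∈ Finset.range n, nu i : ℕ)) := hk
    have : ((2 * k + (∑ i ∈ Finset.range n, mu i) : ℕ) : ℚ) <
        ((∑ i ∈ Finset.range n, nu i : ℕ) : ℚ) := by exact_mod_cast hkq
    push_cast at this hfinal
    linarith
  rw [hP]
  simp
end

section
/- The conjugation involution φ on the ring Λ[[q]] of formal power series with symmetric-function coefficients, defined on the universal orthogonal character basis by φ(s_λ^{so}) = s_{λ'}^{sp}, sends the universal orthogonal graded character ∏_{1≤i<j}(1 - q x_i x_j)^{-1} = Σ_{k,λ} m_k^{so}(λ) s_λ^{so} q^k to the universal symplectic graded character ∏_{1≤i≤j}(1 - q x_i x_j)^{-1} = Σ_{k,λ} m_k^{sp}(λ) s_λ^{sp} q^k. -/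
/-- A partition, encoded as a weakly decreasing, eventually-zero function ℕ → ℕ. -/
def IsPartition (f : ℕ → ℕ) : Prop := Antitone f ∧ ∃ N, ∀ i, N ≤ i → f i = 0

/-- The conjugate partition: λ'_{i+1} = #{j : λ_j > i}. -/
noncomputable def conjP (f : ℕ → ℕ) : ℕ → ℕ := fun i => Nat.card {j : ℕ | i < f j}

/-- The size |λ| = Σ_i λ_i. -/
noncomputable def sizeP (f : ℕ → ℕ) : ℕ := ∑ᶠ i, f i

/-- m_k^{so}(λ) = Σ_{ν ⊢ 2k, ν' even} Σ_{γ' even} c^ν_{λ,γ}. -/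
noncomputable def mSO (c : (ℕ → ℕ) → (ℕ → ℕ) → (ℕ → ℕ) → ℕ) (k : ℕ) (l : ℕ → ℕ) : ℕ :=
  ∑ᶠ ν ∈ {ν | IsPartition ν ∧ sizeP ν = 2 * k ∧ ∀ i, Even (conjP ν i)},
    ∑ᶠ γ ∈ {γ | IsPartition γ ∧ ∀ i, Even (conjP γ i)}, c ν l γ

/-- m_k^{sp}(λ) = Σ_{ν ⊢ 2k, ν even} Σ_{γ even} c^ν_{λ,γ}. -/
noncomputable def mSP (c : (ℕ → ℕ) → (ℕ → ℕ) → (ℕ → ℕ) → ℕ) (k : ℕ) (l : ℕ → ℕ) : ℕ :=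
  ∑ᶠ ν ∈ {ν | IsPartition ν ∧ sizeP ν = 2 * k ∧ ∀ i, Even (ν i)},
    ∑ᶠ γ ∈ {γ | IsPartition γ ∧ ∀ i, Even (γ i)}, c ν l γ

section lemmas

variable {f : ℕ → ℕ}

lemma conjP_eq_card (hf : IsPartition f) {N : ℕ} (hN : ∀ i, N ≤ i → f i = 0) (i : ℕ) :
    conjP f i = ((Finset.range N).filter fun j => i < f j).card := by
  have hset : {j : ℕ | i < f j} = ↑((Finset.range N).filter fun j => i < f j) := by
    ext j
    simp only [Set.mem_setOf_eq, Finset.coe_filter, Finset.mem_range, Set.mem_setOf_eq]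
    constructor
    · intro h
      refine ⟨?_, h⟩
      by_contra hj
      rw [hN j (le_of_not_gt hj)] at h
      omega
    · exact fun h => h.2
  rw [conjP, hset, Nat.card_coe_set_eq, Set.ncard_coe_finset]

lemma conjP_lt_iff (hf : IsPartition f) (i j : ℕ) : i < f j ↔ j < conjP f i := by
  obtain ⟨hanti, N, hN⟩ := hf
  rw [conjP_eq_card ⟨hanti, N, hN⟩ hN]
  constructor
  · intro h
    have hsub : Finset.range (j + 1) ⊆ (Finset.range N).filter fun j' => i < f j' := by
      intro j' hj'
      simp only [Finset.mem_range] at hj'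
      have h1 : i < f j' := lt_of_lt_of_le h (hanti (by omega))
      have h2 : j' < N := by
        by_contra hj2
        rw [hN j' (le_of_not_gt hj2)] at h1; omega
      simp [Finset.mem_filter, Finset.mem_range, h1, h2]
    have := Finset.card_le_card hsub
    simpa using this
  · intro h
    by_contra hle
    push_neg at hle
    have hsub : ((Finset.range N).filter fun j' => i < f j') ⊆ Finset.range j := by
      intro j' hj'
      simp only [Finset.mem_filter, Finset.mem_range] at hj'
      simp only [Finset.mem_range]
      by_contra hj2
      have : f j' ≤ f j := hanti (le_of_not_gt hj2)
      omega
    have := Finset.card_le_card hsub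
    simp only [Finset.card_range] at this
    omega

lemma conjP_isPartition (hf : IsPartition f) : IsPartition (conjP f) := by
  obtain ⟨hanti, N, hN⟩ := hf
  have hf : IsPartition f := ⟨hanti, N, hN⟩
  constructor
  · intro i i' h
    rw [conjP_eq_card hf hN, conjP_eq_card hf hN]
    apply Finset.card_le_card
    intro j hj
    simp only [Finset.mem_filter, Finset.mem_range] at hj ⊢
    exact ⟨hj.1, lt_of_le_of_lt h hj.2⟩
  · refine ⟨f 0, fun i hi => ?_⟩
    rw [conjP_eq_card hf hN]
    rw [Finset.card_eq_zero, Finset.filter_eq_empty_iff]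
    intro j _
    have : f j ≤ f 0 := hanti (Nat.zero_le j)
    omega

lemma conjP_conjP (hf : IsPartition f) : conjP (conjP f) = f := by
  funext i
  have : {j : ℕ | i < conjP f j} = Set.Iio (f i) := by
    ext j
    simp only [Set.mem_setOf_eq, Set.mem_Iio]
    rw [← conjP_lt_iff hf]
  rw [conjP, this]
  simp [Nat.card_eq_card_toFinset]

lemma sizeP_eq_sum (hf : IsPartition f) {N : ℕ} (hN : ∀ i, N ≤ i → f i = 0) :
    sizeP f = ∑ i ∈ Finset.range N, f i := by
  apply finsum_eq_sum_of_support_subset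
  intro i hi
  simp only [Function.mem_support] at hi
  simp only [Finset.coe_range, Set.mem_Iio]
  by_contra h
  exact hi (hN i (le_of_not_gt h))

lemma sizeP_conjP (hf : IsPartition f) : sizeP (conjP f) = sizeP f := by
  obtain ⟨hanti, N, hN⟩ := hf
  have hf' : IsPartition f := ⟨hanti, N, hN⟩
  have hc := conjP_isPartition hf'
  have hcN : ∀ i, f 0 ≤ i → conjP f i = 0 := by
    intro i hi
    rw [conjP_eq_card hf' hN, Finset.card_eq_zero, Finset.filter_eq_empty_iff]
    intro j _
    have : f j ≤ f 0 := hanti (Nat.zero_le j)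
    omega
  rw [sizeP_eq_sum hc hcN, sizeP_eq_sum hf' hN]
  have : ∀ i, conjP f i = ∑ j ∈ Finset.range N, if i < f j then 1 else 0 := by
    intro i
    rw [conjP_eq_card hf' hN, Finset.card_filter]
  simp_rw [this]
  rw [Finset.sum_comm]
  apply Finset.sum_congr rfl
  intro j _
  have hle : f j ≤ f 0 := hanti (Nat.zero_le j)
  rw [show (∑ x ∈ Finset.range (f 0), if x < f j then 1 else 0)
      = ((Finset.range (f 0)).filter (fun x => x < f j)).card from (Finset.card_filter _ _).symm]
  have : (Finset.range (f 0)).filter (fun i => i < f j) = Finset.range (f j) := by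
    ext i
    simp only [Finset.mem_filter, Finset.mem_range]
    omega
  simp [this]

end lemmas

section more
variable {f : ℕ → ℕ}

lemma single_le_sizeP (hf : IsPartition f) (i : ℕ) : f i ≤ sizeP f := by
  obtain ⟨hanti, N, hN⟩ := hf
  have hf' : IsPartition f := ⟨hanti, N, hN⟩
  by_cases hi : i < N
  · rw [sizeP_eq_sum hf' hN]
    exact Finset.single_le_sum (fun j _ => Nat.zero_le (f j)) (Finset.mem_range.2 hi)
  · rw [hN i (le_of_not_gt hi)]; exact Nat.zero_le _

lemma zero_of_sizeP_le {n : ℕ} (hf : IsPartition f) (hs : sizeP f ≤ n) {i : ℕ}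
    (hi : n ≤ i) : f i = 0 := by
  obtain ⟨hanti, N, hN⟩ := hf
  have hf' : IsPartition f := ⟨hanti, N, hN⟩
  by_contra h
  have h1 : 1 ≤ f i := Nat.one_le_iff_ne_zero.2 h
  have hiN : i < N := by
    by_contra hc
    exact h (hN i (le_of_not_gt hc))
  have hsub : Finset.range (i + 1) ⊆ Finset.range N := by
    intro x hx; simp only [Finset.mem_range] at *; omega
  have h2 : i + 1 ≤ ∑ j ∈ Finset.range (i + 1), f j := by
    calc i + 1 = ∑ _j ∈ Finset.range (i + 1), 1 := by simp
    _ ≤ _ := Finset.sum_le_sum fun j hj => le_trans h1 (hanti (by simp only [Finset.mem_range] at hj; omega))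
  have h3 : ∑ j ∈ Finset.range (i + 1), f j ≤ sizeP f := by
    rw [sizeP_eq_sum hf' hN]
    exact Finset.sum_le_sum_of_subset hsub
  omega

lemma finite_parts (n : ℕ) : {l : ℕ → ℕ | IsPartition l ∧ sizeP l ≤ n}.Finite := by
  set g : (ℕ → ℕ) → (Fin n → Fin (n + 1)) :=
    fun l => fun i => ⟨min (l i) n, by omega⟩ with hg
  apply Set.Finite.of_finite_image (f := g) (Set.toFinite _)
  intro a ha b hb hab
  simp only [Set.mem_setOf_eq] at ha hb
  funext i
  by_cases hi : i < n
  · have h1 : a i ≤ n := le_trans (single_le_sizeP ha.1 i) ha.2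
    have h2 : b i ≤ n := le_trans (single_le_sizeP hb.1 i) hb.2
    have := congrFun hab ⟨i, hi⟩
    simp only [hg, Fin.mk.injEq] at this
    omega
  · rw [zero_of_sizeP_le ha.1 ha.2 (le_of_not_gt hi),
      zero_of_sizeP_le hb.1 hb.2 (le_of_not_gt hi)]

lemma bijOn_conjP {s t : Set (ℕ → ℕ)} (hs : ∀ f ∈ s, IsPartition f)
    (ht : ∀ f ∈ t, IsPartition f) (hst : ∀ f ∈ s, conjP f ∈ t)
    (hts : ∀ f ∈ t, conjP f ∈ s) : Set.BijOn conjP s t := by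
  refine ⟨hst, ?_, ?_⟩
  · intro a ha b hb hab
    rw [← conjP_conjP (hs a ha), hab, conjP_conjP (hs b hb)]
  · intro a ha
    exact ⟨conjP a, hts a ha, conjP_conjP (ht a ha)⟩

end more


section msect
variable (c : (ℕ → ℕ) → (ℕ → ℕ) → (ℕ → ℕ) → ℕ)

lemma mSP_eq_mSO_conj
    (hsym : ∀ ν l γ, IsPartition ν → IsPartition l → IsPartition γ →
      c ν l γ = c (conjP ν) (conjP l) (conjP γ))
    (k : ℕ) {l : ℕ → ℕ} (hl : IsPartition l) : mSP c k l = mSO c k (conjP l) := by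
  rw [mSP, mSO]
  apply finsum_mem_eq_of_bijOn conjP
  · apply bijOn_conjP
    · exact fun f hf => hf.1
    · exact fun f hf => hf.1
    · rintro f ⟨h1, h2, h3⟩
      refine ⟨conjP_isPartition h1, by rw [sizeP_conjP h1]; exact h2, ?_⟩
      intro i; rw [conjP_conjP h1]; exact h3 i
    · rintro f ⟨h1, h2, h3⟩
      exact ⟨conjP_isPartition h1, by rw [sizeP_conjP h1]; exact h2, h3⟩
  · rintro ν ⟨hν, _, _⟩
    apply finsum_mem_eq_of_bijOn conjP
    · apply bijOn_conjP
      · exact fun f hf => hf.1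
      · exact fun f hf => hf.1
      · rintro f ⟨h1, h3⟩
        refine ⟨conjP_isPartition h1, fun i => ?_⟩
        rw [conjP_conjP h1]; exact h3 i
      · rintro f ⟨h1, h3⟩
        exact ⟨conjP_isPartition h1, h3⟩
    · rintro γ ⟨hγ, _⟩
      exact hsym ν l γ hν hl hγ

lemma mSO_ne_zero (hvanish : ∀ ν l γ, sizeP ν ≠ sizeP l + sizeP γ → c ν l γ = 0)
    (k : ℕ) {l : ℕ → ℕ} (h : mSO c k l ≠ 0) : sizeP l ≤ 2 * k := by
  by_contra hc
  push_neg at hc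
  apply h
  rw [mSO]
  apply finsum_mem_of_eqOn_zero
  rintro ν ⟨_, h2, _⟩
  apply finsum_mem_of_eqOn_zero
  rintro γ _
  apply hvanish
  omega

lemma mSP_ne_zero (hvanish : ∀ ν l γ, sizeP ν ≠ sizeP l + sizeP γ → c ν l γ = 0)
    (k : ℕ) {l : ℕ → ℕ} (h : mSP c k l ≠ 0) : sizeP l ≤ 2 * k := by
  by_contra hc
  push_neg at hc
  apply h
  rw [mSP]
  apply finsum_mem_of_eqOn_zero
  rintro ν ⟨_, h2, _⟩
  apply finsum_mem_of_eqOn_zero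
  rintro γ _
  apply hvanish
  omega

end msect



/-- the conjugation involution φ on Λ[[q]], defined on the universal
orthogonal character basis by φ(s_λ^{so}) = s_{λ'}^{sp}, sends the universal orthogonal
graded character ∏_{i<j}(1-qx_ix_j)^{-1} = Σ_{k,λ} m_k^{so}(λ) s_λ^{so} q^k to the
universal symplectic graded character ∏_{i≤j}(1-qx_ix_j)^{-1} = Σ_{k,λ} m_k^{sp}(λ) s_λ^{sp} q^k.
Formulated coefficientwise in q: Λ is a ℤ-module equipped with the (Koike–Terada) families
s^{so}, s^{sp} indexed by partitions, φ is ℤ-linear with φ(s_λ^{so}) = s_{λ'}^{sp}, the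
Littlewood–Richardson coefficients c are characterized by their conjugation symmetry and
size-vanishing, and the coefficient of q^k of each graded character is the (finitely
supported) sum Σ_λ m_k(λ)·s_λ over partitions λ. -/
theorem stmt12 {Λ : Type*} [AddCommGroup Λ] [Module ℤ Λ]
    (sso ssp : (ℕ → ℕ) → Λ) (φ : Λ →ₗ[ℤ] Λ)
    (hφ : ∀ l, IsPartition l → φ (sso l) = ssp (conjP l))
    (c : (ℕ → ℕ) → (ℕ → ℕ) → (ℕ → ℕ) → ℕ)
    (hsym : ∀ ν l γ, IsPartition ν → IsPartition l → IsPartition γ →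
      c ν l γ = c (conjP ν) (conjP l) (conjP γ))
    (hvanish : ∀ ν l γ, sizeP ν ≠ sizeP l + sizeP γ → c ν l γ = 0)
    (k : ℕ) :
    φ (∑ᶠ l ∈ {l | IsPartition l}, (mSO c k l : ℤ) • sso l) =
      ∑ᶠ l ∈ {l | IsPartition l}, (mSP c k l : ℤ) • ssp l := by
  set S : Set (ℕ → ℕ) := {l | IsPartition l} with hS
  have hTfin := finite_parts (2 * k)
  -- Step 1: push φ inside the finsum.
  have step1 : φ (∑ᶠ l ∈ S, (mSO c k l : ℤ) • sso l)
      = ∑ᶠ l ∈ S, (mSO c k l : ℤ) • ssp (conjP l) := by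
    rw [finsum_mem_def, finsum_mem_def]
    have hfin : (Function.support
        (Set.indicator S fun l => (mSO c k l : ℤ) • sso l)).Finite := by
      apply hTfin.subset
      intro l hl
      simp only [Function.mem_support] at hl
      by_cases hlS : l ∈ S
      · rw [Set.indicator_of_mem hlS] at hl
        have hm : mSO c k l ≠ 0 := by
          intro h0
          apply hl
          rw [h0]; simp
        exact ⟨hlS, mSO_ne_zero c hvanish k hm⟩
      · rw [Set.indicator_of_notMem hlS] at hl
        exact absurd rfl hl
    have hmap := φ.toAddMonoidHom.map_finsum hfin
    simp only [LinearMap.toAddMonoidHom_coe] at hmap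
    rw [hmap]
    apply finsum_congr
    intro l
    by_cases hlS : l ∈ S
    · rw [Set.indicator_of_mem hlS, Set.indicator_of_mem hlS]
      exact (φ.toAddMonoidHom.map_zsmul _ _).trans (by rw [LinearMap.toAddMonoidHom_coe, hφ l hlS])
    · rw [Set.indicator_of_notMem hlS, Set.indicator_of_notMem hlS]
      exact map_zero φ
  rw [step1]
  -- Step 2: reindex via conjugation.
  apply finsum_mem_eq_of_bijOn conjP
  · exact bijOn_conjP (fun f hf => hf) (fun f hf => hf)
      (fun f hf => conjP_isPartition hf) (fun f hf => conjP_isPartition hf)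
  · intro l hl
    have h1 : mSP c k (conjP l) = mSO c k l := by
      rw [mSP_eq_mSO_conj c hsym k (conjP_isPartition hl), conjP_conjP hl]
    rw [h1]
end
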